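/- arXiv:2310.11625 — 2 statements merged into one kernel-verified Lean document; each statement's English description precedes it below -/
import Mathlib

section
/- If the contact form η on a compact strictly pseudoconvex CR manifold (N,D,I) has pointwise positive Tanaka–Webster scalar curvature, then every ξ-invariant compatible contact form f^{-1}η (f smooth, positive, ξ-invariant) has positive total Tanaka–Webster scalar curvature. -/
open MeasureTheory

/-- If the contact form `η` on a compact strictly pseudoconvex CR
manifold `(N,D,I)` of dimension `2n+1` has pointwise positive Tanaka–Webster
scalar curvature, then every ξ-invariant compatible contact form `f⁻¹η`
(`f` smooth, positive, ξ-invariant) has positive total Tanaka–Webster scalar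
curvature. By Lee's formula, the total Tanaka–Webster scalar curvature of
`f⁻¹η` is `∫_N ( f^{-n} Scal(η) + n(n+1) f^{-n-2} |df|²_η ) η∧(dη)^{[n]}`,
where `μ = η∧(dη)^{[n]}` is the contact volume measure. -/
theorem total_TW_scalar_positive
    {N : Type*} [MeasurableSpace N] (μ : Measure N) [IsFiniteMeasure μ]
    (hμ : μ ≠ 0)
    (n : ℕ) (f Scal dfsq : N → ℝ)
    (hf : ∀ x, 0 < f x) (hScal : ∀ x, 0 < Scal x) (hdfsq : ∀ x, 0 ≤ dfsq x)
    (Stot : ℝ)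
    -- value of the total Tanaka–Webster scalar curvature of f⁻¹η (Lee's formula)
    (hTot : Stot = ∫ x, (Scal x / f x ^ n
        + (n : ℝ) * (n + 1) * dfsq x / f x ^ (n + 2)) ∂μ)
    (hI : Integrable (fun x => Scal x / f x ^ n
        + (n : ℝ) * (n + 1) * dfsq x / f x ^ (n + 2)) μ) :
    0 < Stot := by
  subst hTot
  have hpos : ∀ x, 0 < Scal x / f x ^ n
      + (n : ℝ) * (n + 1) * dfsq x / f x ^ (n + 2) := by
    intro x
    have h1 : 0 < Scal x / f x ^ n := div_pos (hScal x) (pow_pos (hf x) n)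
    have h2 : 0 ≤ (n : ℝ) * (n + 1) * dfsq x / f x ^ (n + 2) := by
      apply div_nonneg
      · have := hdfsq x; positivity
      · exact le_of_lt (pow_pos (hf x) (n + 2))
    linarith
  rw [integral_pos_iff_support_of_nonneg (fun x => (hpos x).le) hI]
  have : Function.support (fun x => Scal x / f x ^ n
      + (n : ℝ) * (n + 1) * dfsq x / f x ^ (n + 2)) = Set.univ := by
    ext x; simp [Function.mem_support, (hpos x).ne']
  rw [this]
  simpa [Measure.measure_univ_pos] using hμ
end

section
/- Along a smooth one-parameter family of ξ-invariant positive conformal factors f_s, the derivative of the Einstein–Hilbert functional EH(f) = S_f / V_f^{n/(n+1)} satisfies (d/ds EH_{f_s})|_{s=0} = −(n/V_f^{n/(n+1)}) ∫_N (ḟ/f)( Scal(η_f) − S_f/V_f ) η_f∧(dη_f)^{[n]}. Consequently, a ξ-invariant compatible contact form η_f is a critical point of EH restricted to ξ-invariant conformal factors if and only if Scal(η_f) is constant. -/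
open MeasureTheory

/-! With `u = ḟ/f`, the quotient rule applied to `S / V^{n/(n+1)}`, together with
`S' = -n ∫ u·Scal` and `V' = -(n+1) ∫ u`, gives `-n V^{-n/(n+1)} ∫ u·(Scal - S/V)`.
For criticality, testing against `u = h / (1 + h²)` with `h = Scal - S/V` yields the nonnegative
continuous integrand `h² / (1 + h²)` (times the volume density) with zero integral; it vanishes
identically because `μ` charges every nonempty open set. -/

theorem HasDerivAt.div_rpow_const {a b : ℝ → ℝ} {a' b' p t : ℝ}
    (ha : HasDerivAt a a' t) (hb : HasDerivAt b b' t) (hbt : 0 < b t) :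
    HasDerivAt (fun s => a s / b s ^ p) ((a' - p * (a t / b t) * b') / b t ^ p) t := by
  have hbp : b t ^ p ≠ 0 := (Real.rpow_pos_of_pos hbt p).ne'
  refine (ha.div (hb.rpow_const (p := p) (Or.inl hbt.ne')) hbp).congr_deriv ?_
  rw [Real.rpow_sub hbt, Real.rpow_one]
  field_simp

theorem eq_zero_of_forall_integral_mul_mul_eq_zero {X : Type*} [TopologicalSpace X]
    [MeasurableSpace X] [OpensMeasurableSpace X] {μ : Measure X} [μ.IsOpenPosMeasure]
    {w h : X → ℝ} (hwc : Continuous w) (hw : ∀ x, 0 < w x) (hwi : Integrable w μ)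
    (hhc : Continuous h)
    (horth : ∀ g : X → ℝ, Continuous g → ∫ x, g x * h x * w x ∂μ = 0) :
    h = 0 := by
  have hden : ∀ x, 0 < 1 + h x ^ 2 := fun x => by positivity
  set F : X → ℝ := fun x => h x ^ 2 / (1 + h x ^ 2) * w x with hF
  have hFc : Continuous F :=
    ((hhc.pow 2).div (continuous_const.add (hhc.pow 2)) fun x => (hden x).ne').mul hwc
  have hFnn : 0 ≤ F := fun x => mul_nonneg (div_nonneg (sq_nonneg _) (hden x).le) (hw x).le
  have hFle : ∀ x, F x ≤ w x := fun x =>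
    mul_le_of_le_one_left (hw x).le ((div_le_one (hden x)).2 (by linarith))
  have hFi : Integrable F μ :=
    hwi.mono' hFc.aestronglyMeasurable (Filter.Eventually.of_forall fun x => by
      rw [Real.norm_eq_abs, abs_of_nonneg (hFnn x)]; exact hFle x)
  have hF0 : ∫ x, F x ∂μ = 0 := by
    have := horth (fun x => h x / (1 + h x ^ 2))
      (hhc.div (continuous_const.add (hhc.pow 2)) fun x => (hden x).ne')
    convert this using 3 with x
    ring
  have hFeq : F = 0 :=
    (hFc.ae_eq_iff_eq μ continuous_const).1 ((integral_eq_zero_iff_of_nonneg hFnn hFi).1 hF0)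
  funext x
  have hx := congrFun hFeq x
  simp only [hF, Pi.zero_apply, mul_eq_zero, div_eq_zero_iff, (hw x).ne', (hden x).ne',
    or_false] at hx
  exact pow_eq_zero_iff two_ne_zero |>.1 hx

theorem EH_first_variation_and_criticality_general
    {N : Type*} [TopologicalSpace N] [MeasurableSpace N] [OpensMeasurableSpace N]
    (μ : Measure N) [μ.IsOpenPosMeasure]
    (n : ℕ)
    (f : N → ℝ) (hfc : Continuous f) (hf : ∀ x, 0 < f x)
    (Sc : N → ℝ) (hScc : Continuous Sc)   -- Scal(η_f)
    (S V : ℝ) (hVpos : 0 < V)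
    (hS : S = ∫ x, Sc x / f x ^ (n + 1) ∂μ)
    (hV : V = ∫ x, 1 / f x ^ (n + 1) ∂μ)
    (fdot : N → ℝ)
    (Stot Vtot : ℝ → ℝ)
    (hS0 : Stot 0 = S) (hV0 : Vtot 0 = V)
    (hSder : HasDerivAt Stot
        (-(n : ℝ) * ∫ x, (fdot x / f x) * Sc x / f x ^ (n + 1) ∂μ) 0)
    (hVder : HasDerivAt Vtot
        (-((n : ℝ) + 1) * ∫ x, (fdot x / f x) / f x ^ (n + 1) ∂μ) 0)
    (hI1 : Integrable (fun x => (fdot x / f x) * Sc x / f x ^ (n + 1)) μ)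
    (hI2 : Integrable (fun x => (fdot x / f x) / f x ^ (n + 1)) μ) :
    HasDerivAt (fun s => Stot s / Vtot s ^ ((n : ℝ) / (n + 1)))
      (-(n : ℝ) / V ^ ((n : ℝ) / (n + 1))
        * ∫ x, (fdot x / f x) * (Sc x - S / V) / f x ^ (n + 1) ∂μ) 0
    ∧ ((∀ g : N → ℝ, Continuous g →
          ∫ x, (g x / f x) * (Sc x - S / V) / f x ^ (n + 1) ∂μ = 0)
        ↔ ∃ c : ℝ, ∀ x, Sc x = c) := by
  have hw : ∀ x, 0 < 1 / f x ^ (n + 1) := fun x => by have := hf x; positivity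
  have hwi : Integrable (fun x => 1 / f x ^ (n + 1)) μ := by
    by_contra hni
    rw [integral_undef hni] at hV
    exact hVpos.ne' hV
  have hsplit : ∀ c : ℝ, ∫ x, (fdot x / f x) * (Sc x - c) / f x ^ (n + 1) ∂μ
      = (∫ x, (fdot x / f x) * Sc x / f x ^ (n + 1) ∂μ)
        - c * ∫ x, (fdot x / f x) / f x ^ (n + 1) ∂μ := fun c => by
    rw [← integral_const_mul, ← integral_sub hI1 (hI2.const_mul c)]
    congr 1 with x
    ring
  refine ⟨?_, ⟨fun hcrit => ⟨S / V, fun x => ?_⟩, fun ⟨c, hc⟩ g _ => ?_⟩⟩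
  · have hEH := hSder.div_rpow_const (p := (n : ℝ) / (n + 1)) hVder (hV0 ▸ hVpos)
    rw [hS0, hV0] at hEH
    refine hEH.congr_deriv ?_
    rw [hsplit]
    field_simp
    ring
  · have hScal : (fun x => Sc x - S / V) = 0 := by
      refine eq_zero_of_forall_integral_mul_mul_eq_zero (μ := μ)
        (w := fun x => 1 / f x ^ (n + 1))
        (continuous_const.div (hfc.pow _) fun x => (pow_pos (hf x) _).ne') hw hwi
        (hScc.sub continuous_const) fun g hg => ?_
      rw [← hcrit (fun x => f x * g x) (hfc.mul hg)]
      congr 1 with x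
      field_simp [(hf x).ne']
    exact sub_eq_zero.1 (congrFun hScal x)
  · have hSV : S / V = c := by
      rw [div_eq_iff hVpos.ne', hS, hV, ← integral_const_mul]
      congr 1 with x
      rw [hc x]
      ring
    simp only [hc, hSV, sub_self, mul_zero, zero_div, integral_zero]

/-- Along a smooth one-parameter family of ξ-invariant positive
conformal factors `f_s`, the Einstein–Hilbert functional
`EH(f) = S_f / V_f^{n/(n+1)}` satisfies
`(d/ds EH_{f_s})|_{s=0} = −(n/V_f^{n/(n+1)}) ∫_N (ḟ/f)(Scal(η_f) − S_f/V_f) η_f∧(dη_f)^{[n]}`.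
Consequently, `η_f` is a critical point of `EH` restricted to ξ-invariant
conformal factors if and only if `Scal(η_f)` is constant. Here
`μ = η∧(dη)^{[n]}`, the volume form of `η_f` is `f^{-1-n}·μ`,
`S = S_f`, `V = V_f`, `Sc = Scal(η_f)`, and the first variations of `S` and
`V` along the family are given as hypotheses. -/
theorem EH_first_variation_and_criticality
    {N : Type*} [TopologicalSpace N] [MeasurableSpace N] [OpensMeasurableSpace N]
    (μ : Measure N) [IsFiniteMeasure μ] [μ.IsOpenPosMeasure]
    (n : ℕ) (hn : 0 < n)
    (f : N → ℝ) (hfc : Continuous f) (hf : ∀ x, 0 < f x)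
    (Sc : N → ℝ) (hScc : Continuous Sc)   -- Scal(η_f)
    (S V : ℝ) (hVpos : 0 < V)
    (hS : S = ∫ x, Sc x / f x ^ (n + 1) ∂μ)
    (hV : V = ∫ x, 1 / f x ^ (n + 1) ∂μ)
    (fdot : N → ℝ)
    (Stot Vtot : ℝ → ℝ)
    (hS0 : Stot 0 = S) (hV0 : Vtot 0 = V)
    (hSder : HasDerivAt Stot
        (-(n : ℝ) * ∫ x, (fdot x / f x) * Sc x / f x ^ (n + 1) ∂μ) 0)
    (hVder : HasDerivAt Vtot
        (-((n : ℝ) + 1) * ∫ x, (fdot x / f x) / f x ^ (n + 1) ∂μ) 0)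
    (hI1 : Integrable (fun x => (fdot x / f x) * Sc x / f x ^ (n + 1)) μ)
    (hI2 : Integrable (fun x => (fdot x / f x) / f x ^ (n + 1)) μ) :
    HasDerivAt (fun s => Stot s / Vtot s ^ ((n : ℝ) / (n + 1)))
      (-(n : ℝ) / V ^ ((n : ℝ) / (n + 1))
        * ∫ x, (fdot x / f x) * (Sc x - S / V) / f x ^ (n + 1) ∂μ) 0
    ∧ ((∀ g : N → ℝ, Continuous g →
          ∫ x, (g x / f x) * (Sc x - S / V) / f x ^ (n + 1) ∂μ = 0)
        ↔ ∃ c : ℝ, ∀ x, Sc x = c) :=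
  EH_first_variation_and_criticality_general μ n f hfc hf Sc hScc S V hVpos hS hV fdot Stot Vtot hS0
    hV0 hSder hVder hI1 hI2
end
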